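/- Fix x̌, x̂ ∈ ℝⁿ with x̌⁽ˡ⁾ ≤ x̂⁽ˡ⁾ for every l, let g be the associated erf-product function, let v̄ = (x̌ + x̂)/2, and let ž, ẑ ∈ ℝⁿ with ž⁽ˡ⁾ ≤ ẑ⁽ˡ⁾ for all l. Define z_max ∈ ℝⁿ coordinatewise by z_max⁽ˡ⁾ = v̄⁽ˡ⁾ if v̄⁽ˡ⁾ ∈ [ž⁽ˡ⁾, ẑ⁽ˡ⁾] and otherwise the endpoint of [ž⁽ˡ⁾, ẑ⁽ˡ⁾] closer to v̄⁽ˡ⁾, and define z_min ∈ ℝⁿ coordinatewise as the endpoint of [ž⁽ˡ⁾, ẑ⁽ˡ⁾] farther from v̄⁽ˡ⁾. Then for every z in the box [ž, ẑ], the mass assigned to the box [x̌, x̂] by the product measure on ℝⁿ whose l-th factor is the Gaussian measure with mean z⁽ˡ⁾ and variance 1 lies in the interval [g(z_min), g(z_max)]. -/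

import Mathlib

/-! Under `N(m, v)` the interval `[a, b]` has mass `(erf (d + c) - erf (d - c)) / 2`, where `c` is
its half-width and `d` the offset of the mean from its midpoint, both divided by `√(2v)`. The
derivative in `d` is a positive multiple of `exp (-(d + c)²) - exp (-(d - c)²)`, which is `≤ 0` for
`c, d ≥ 0`; with evenness in `d` this makes the mass antitone in `|d|`. The product measure of the
box factorises, so it is largest when every coordinate of the mean is as close as possible to the
midpoint `v̄` (at `z_max`) and smallest when every coordinate is as far as possible (at `z_min`). -/

open MeasureTheory ProbabilityTheory

/-- The Gauss error function `erf x = (2/√π) ∫₀ˣ exp (−t²) dt`. -/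
noncomputable def erf (x : ℝ) : ℝ :=
  (2 / Real.sqrt Real.pi) * ∫ t in (0:ℝ)..x, Real.exp (-t ^ 2)

/-- The erf-product function
`g z = 2⁻ⁿ ∏ₗ (erf((zₗ − x̌ₗ)/√2) − erf((zₗ − x̂ₗ)/√2))`. -/
noncomputable def gerf {n : ℕ} (xlo xhi : Fin n → ℝ) (z : Fin n → ℝ) : ℝ :=
  (1 / 2 : ℝ) ^ n *
    ∏ l, (erf ((z l - xlo l) / Real.sqrt 2) - erf ((z l - xhi l) / Real.sqrt 2))

open Real Set
open scoped NNReal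

lemma hasDerivAt_erf (x : ℝ) : HasDerivAt erf (2 / √π * exp (-x ^ 2)) x := by
  have hcont : Continuous fun t : ℝ => exp (-t ^ 2) := by fun_prop
  exact (intervalIntegral.integral_hasDerivAt_right (hcont.intervalIntegrable 0 x)
    hcont.stronglyMeasurable.stronglyMeasurableAtFilter hcont.continuousAt).const_mul _

lemma erf_monotone : Monotone erf :=
  monotone_of_hasDerivAt_nonneg hasDerivAt_erf fun x => by positivity

lemma erf_neg (x : ℝ) : erf (-x) = -erf x := by
  have h := intervalIntegral.integral_comp_neg (a := 0) (b := x) fun t => exp (-t ^ 2)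
  simp only [neg_sq, neg_zero] at h
  rw [erf, erf, h, intervalIntegral.integral_symm 0 (-x)]
  ring

noncomputable def erfWindow (c d : ℝ) : ℝ := erf (d + c) - erf (d - c)

lemma erfWindow_neg (c d : ℝ) : erfWindow c (-d) = erfWindow c d := by
  rw [erfWindow, erfWindow, show -d + c = -(d - c) by ring, show -d - c = -(d + c) by ring,
    erf_neg, erf_neg]
  ring

lemma hasDerivAt_erfWindow (c d : ℝ) :
    HasDerivAt (erfWindow c) (2 / √π * (exp (-(d + c) ^ 2) - exp (-(d - c) ^ 2))) d :=
  (((hasDerivAt_erf _).comp d ((hasDerivAt_id' d).add_const c)).sub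
    ((hasDerivAt_erf _).comp d ((hasDerivAt_id' d).sub_const c))).congr_deriv (by ring)

lemma antitoneOn_erfWindow {c : ℝ} (hc : 0 ≤ c) : AntitoneOn (erfWindow c) (Ici 0) := by
  refine antitoneOn_of_hasDerivWithinAt_nonpos (convex_Ici 0)
    (fun d _ => (hasDerivAt_erfWindow c d).continuousAt.continuousWithinAt)
    (fun d _ => (hasDerivAt_erfWindow c d).hasDerivWithinAt) fun d hd => ?_
  rw [interior_Ici, mem_Ioi] at hd
  have h_exp : exp (-(d + c) ^ 2) ≤ exp (-(d - c) ^ 2) := exp_le_exp.2 (by nlinarith)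
  exact mul_nonpos_of_nonneg_of_nonpos (by positivity) (sub_nonpos.2 h_exp)

lemma erfWindow_le_of_abs_le {c d₁ d₂ : ℝ} (hc : 0 ≤ c) (h : |d₁| ≤ |d₂|) :
    erfWindow c d₂ ≤ erfWindow c d₁ := by
  have h_abs : ∀ d, erfWindow c |d| = erfWindow c d := fun d => by
    rcases abs_choice d with hd | hd <;> simp only [hd, erfWindow_neg]
  rw [← h_abs d₁, ← h_abs d₂]
  exact antitoneOn_erfWindow hc (abs_nonneg d₁) (abs_nonneg d₂) h

lemma gaussianReal_Icc (m : ℝ) {v : ℝ≥0} (hv : v ≠ 0) {a b : ℝ} (hab : a ≤ b) :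
    gaussianReal m v (Icc a b) =
      ENNReal.ofReal ((erf ((m - a) / √(2 * v)) - erf ((m - b) / √(2 * v))) / 2) := by
  set s := √(2 * (v : ℝ))
  have hs : 0 < s := by positivity
  have hF : ∀ x, HasDerivAt (fun x => -erf ((m - x) / s) / 2) (gaussianPDFReal m v x) x := by
    intro x
    have h_arg := ((hasDerivAt_id' x).const_sub m).div_const s
    refine (((hasDerivAt_erf _).comp x h_arg).neg.div_const 2).congr_deriv ?_
    have hsq : ((m - x) / s) ^ 2 = (x - m) ^ 2 / (2 * v) := by
      rw [div_pow, sq_sqrt (by positivity)]; ring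
    have hnorm : √(2 * π * v) = √π * s := by
      rw [← sqrt_mul pi_pos.le]; ring_nf
    rw [gaussianPDFReal, hsq, hnorm, neg_div]
    field_simp
  rw [gaussianReal_apply_eq_integral _ hv, integral_Icc_eq_integral_Ioc,
    ← intervalIntegral.integral_of_le hab, intervalIntegral.integral_eq_sub_of_hasDerivAt
      (fun x _ => hF x) (integrable_gaussianPDFReal m v).intervalIntegrable]
  ring_nf

lemma gaussianReal_Icc_le_of_abs_sub_le (v : ℝ≥0) {a b m₁ m₂ : ℝ}
    (h : |m₁ - (a + b) / 2| ≤ |m₂ - (a + b) / 2|) :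
    gaussianReal m₂ v (Icc a b) ≤ gaussianReal m₁ v (Icc a b) := by
  rcases lt_or_ge b a with hba | hab
  · simp [Icc_eq_empty_of_lt hba]
  rcases eq_or_ne v 0 with rfl | hv
  · rw [gaussianReal_zero_var, gaussianReal_zero_var]
    by_cases hm₂ : m₂ ∈ Icc a b
    · have hm₁ : m₁ ∈ Icc a b := by
        rw [Real.Icc_eq_closedBall, Metric.mem_closedBall, Real.dist_eq] at hm₂ ⊢
        exact h.trans hm₂
      rw [Measure.dirac_apply_of_mem hm₁]
      exact prob_le_one
    · rw [Measure.dirac_apply' _ measurableSet_Icc, indicator_of_notMem hm₂]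
      exact zero_le
  set s := √(2 * (v : ℝ))
  have hs : 0 < s := by positivity
  have h_window : ∀ m, erf ((m - a) / s) - erf ((m - b) / s) =
      erfWindow ((b - a) / 2 / s) ((m - (a + b) / 2) / s) := fun m => by
    rw [erfWindow]; congr 2 <;> ring
  rw [gaussianReal_Icc m₁ hv hab, gaussianReal_Icc m₂ hv hab, h_window, h_window]
  gcongr
  refine erfWindow_le_of_abs_le (div_nonneg (by linarith) hs.le) ?_
  rw [abs_div, abs_div]
  gcongr

lemma abs_nearest_sub_le_abs_sub {lo hi z v : ℝ} (hz : z ∈ Icc lo hi) :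
    |(if v ∈ Icc lo hi then v else if |lo - v| ≤ |hi - v| then lo else hi) - v| ≤ |z - v| := by
  by_cases hv : v ∈ Icc lo hi
  · simp [hv]
  have hmin : min |lo - v| |hi - v| ≤ |z - v| := by
    rw [mem_Icc, not_and_or, not_le, not_le] at hv
    rcases hv with hv | hv
    · refine min_le_of_left_le ?_
      rw [abs_of_pos (by linarith), abs_of_pos (by linarith [hz.1])]
      linarith [hz.1]
    · refine min_le_of_right_le ?_
      rw [abs_of_neg (by linarith), abs_of_neg (by linarith [hz.2])]
      linarith [hz.2]
  rw [if_neg hv]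
  split_ifs with h
  · rwa [min_eq_left h] at hmin
  · rwa [min_eq_right (le_of_not_ge h)] at hmin

lemma abs_sub_le_abs_farthest_sub {lo hi z v : ℝ} (hz : z ∈ Icc lo hi) :
    |z - v| ≤ |(if |hi - v| ≤ |lo - v| then lo else hi) - v| := by
  have hmax : |z - v| ≤ max |lo - v| |hi - v| :=
    abs_le_max_abs_abs (by linarith [hz.1]) (by linarith [hz.2])
  split_ifs with h
  · rwa [max_eq_left h] at hmax
  · rwa [max_eq_right (le_of_not_ge h)] at hmax

lemma measure_pi_Icc_gaussianReal_one {n : ℕ} {xlo xhi : Fin n → ℝ} (hx : ∀ l, xlo l ≤ xhi l)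
    (z : Fin n → ℝ) :
    Measure.pi (fun l => gaussianReal (z l) 1) (Icc xlo xhi) = ENNReal.ofReal (gerf xlo xhi z) := by
  have h_factor : ∀ l, gaussianReal (z l) 1 (Icc (xlo l) (xhi l)) = ENNReal.ofReal
      ((erf ((z l - xlo l) / √2) - erf ((z l - xhi l) / √2)) / 2) := fun l => by
    simpa using gaussianReal_Icc (z l) one_ne_zero (hx l)
  have h_nonneg : ∀ l, 0 ≤ (erf ((z l - xlo l) / √2) - erf ((z l - xhi l) / √2)) / 2 :=
    fun l => div_nonneg (sub_nonneg.2 (erf_monotone (by gcongr; exact hx l))) zero_le_two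
  rw [← pi_univ_Icc, Measure.pi_pi, Finset.prod_congr rfl fun l _ => h_factor l,
    ← ENNReal.ofReal_prod_of_nonneg fun l _ => h_nonneg l, Finset.prod_div_distrib,
    Finset.prod_const, Finset.card_univ, Fintype.card_fin, gerf, one_div, inv_pow,
    div_eq_inv_mul]

theorem pi_gaussian_mass_between_gerf_bounds_general
    {n : ℕ} (xlo xhi : Fin n → ℝ) (hx : ∀ l, xlo l ≤ xhi l)
    (zlo zhi : Fin n → ℝ)
    (vbar : Fin n → ℝ) (hvbar : vbar = fun l => (xlo l + xhi l) / 2)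
    (zmax : Fin n → ℝ)
    (hzmax : ∀ l, zmax l =
      if vbar l ∈ Set.Icc (zlo l) (zhi l) then vbar l
      else if |zlo l - vbar l| ≤ |zhi l - vbar l| then zlo l else zhi l)
    (zmin : Fin n → ℝ)
    (hzmin : ∀ l, zmin l =
      if |zhi l - vbar l| ≤ |zlo l - vbar l| then zlo l else zhi l) :
    ∀ z ∈ Set.Icc zlo zhi,
      Measure.pi (fun l : Fin n => gaussianReal (z l) 1) (Set.Icc xlo xhi) ∈
        Set.Icc (ENNReal.ofReal (gerf xlo xhi zmin))
          (ENNReal.ofReal (gerf xlo xhi zmax)) := by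
  intro z hz
  subst hvbar
  rw [← measure_pi_Icc_gaussianReal_one hx, ← measure_pi_Icc_gaussianReal_one hx,
    ← pi_univ_Icc, Measure.pi_pi, Measure.pi_pi, Measure.pi_pi]
  refine ⟨Finset.prod_le_prod' fun l _ => ?_, Finset.prod_le_prod' fun l _ => ?_⟩
  · refine gaussianReal_Icc_le_of_abs_sub_le 1 ?_
    rw [hzmin l]
    exact abs_sub_le_abs_farthest_sub ⟨hz.1 l, hz.2 l⟩
  · refine gaussianReal_Icc_le_of_abs_sub_le 1 ?_
    rw [hzmax l]
    exact abs_nearest_sub_le_abs_sub ⟨hz.1 l, hz.2 l⟩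

/-- Theorem 1 combined with formula (3): for every mean vector `z` in
the box `[ž, ẑ]`, the mass assigned to the target box `[x̌, x̂]` by the product of
unit-variance Gaussians with means `z l` lies between `g z_min` and `g z_max`. -/
theorem pi_gaussian_mass_between_gerf_bounds
    {n : ℕ} (xlo xhi : Fin n → ℝ) (hx : ∀ l, xlo l ≤ xhi l)
    (zlo zhi : Fin n → ℝ) (hz : ∀ l, zlo l ≤ zhi l)
    (vbar : Fin n → ℝ) (hvbar : vbar = fun l => (xlo l + xhi l) / 2)
    (zmax : Fin n → ℝ)
    (hzmax : ∀ l, zmax l =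
      if vbar l ∈ Set.Icc (zlo l) (zhi l) then vbar l
      else if |zlo l - vbar l| ≤ |zhi l - vbar l| then zlo l else zhi l)
    (zmin : Fin n → ℝ)
    (hzmin : ∀ l, zmin l =
      if |zhi l - vbar l| ≤ |zlo l - vbar l| then zlo l else zhi l) :
    ∀ z ∈ Set.Icc zlo zhi,
      Measure.pi (fun l : Fin n => gaussianReal (z l) 1) (Set.Icc xlo xhi) ∈
        Set.Icc (ENNReal.ofReal (gerf xlo xhi zmin))
          (ENNReal.ofReal (gerf xlo xhi zmax)) :=
  pi_gaussian_mass_between_gerf_bounds_general xlo xhi hx zlo zhi vbar hvbar zmax hzmax zmin hzmin
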